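/- Let T be a tree and M a submonoid of Emb(T). If the limit set L(M) has exactly two elements, then every non-elliptic element of M is hyperbolic. -/

import Mathlib

/-!
A non-elliptic self-embedding `g` of a tree has a translation ray `D`, with `g (D i) = D (i + n)`
for some `n > 0`: for a vertex `v` of minimal displacement, the geodesic from `v` to `g v` and its
translates under the powers of `g` concatenate without backtracking. Every orbit of `g` converges
to the end of `D`, so this end lies in `L(M)`; let `ξ` be the other limit point. As `g` maps
`L(M)` into itself and acts injectively on ends, `g` fixes `ξ` as well. Finally, `g` fixes no
third end: on a ray of a fixed end other than the end of `D`, `g` eventually acts as a backward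
shift, and two such rays are equivalent: otherwise a vertex `z` separates them, and pulling back
along `g^k` shows that every `g^k z` lies on each walk joining two fixed vertices of these rays,
while the orbit of `z` escapes to the end of `D`.
-/

open SimpleGraph

variable {V : Type*}

/-- `g` is a self-embedding of `G`: injective and adjacency-preserving. -/
def IsEmb (G : SimpleGraph V) (g : V → V) : Prop :=
  Function.Injective g ∧ ∀ u v : V, G.Adj u v → G.Adj (g u) (g v)

/-- A ray in `G`: a one-way infinite path. -/
structure GRay (G : SimpleGraph V) where
  f : ℕ → V
  inj : Function.Injective f
  adj : ∀ n, G.Adj (f n) (f (n + 1))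

/-- Two rays are equivalent (lie in the same end): for every vertex `v` they have
tails avoiding `v` lying in the same component of `G − v`. -/
def RayEquiv (G : SimpleGraph V) (R S : GRay G) : Prop :=
  ∀ v : V, ∃ m n : ℕ, (∀ i, m ≤ i → R.f i ≠ v) ∧ (∀ j, n ≤ j → S.f j ≠ v) ∧
    ∃ w : G.Walk (R.f m) (S.f n), v ∉ w.support

/-- `g` fixes the end represented by the ray `R`: the image ray is equivalent to `R`. -/
def FixesEnd (G : SimpleGraph V) (g : V → V) (R : GRay G) : Prop :=
  ∃ S : GRay G, (∀ n, S.f n = g (R.f n)) ∧ RayEquiv G S R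

def FixesVertex (g : V → V) : Prop := ∃ v, g v = v

/-- `g` fixes an edge setwise (possibly swapping its endpoints). -/
def FixesEdge (G : SimpleGraph V) (g : V → V) : Prop :=
  ∃ u v : V, G.Adj u v ∧ ((g u = u ∧ g v = v) ∨ (g u = v ∧ g v = u))

/-- `g` fixes setwise a non-empty finite subtree of `G`. -/
def FixesFiniteSubtree (G : SimpleGraph V) (g : V → V) : Prop :=
  ∃ S : Set V, S.Nonempty ∧ S.Finite ∧ (G.induce S).Connected ∧ g '' S = S

/-- `R` is a ray with `g(R) ⊆ R`; for non-elliptic `g` its end is the direction `g⁺`. -/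
def DirectionRay (G : SimpleGraph V) (g : V → V) (R : GRay G) : Prop :=
  ∀ n, ∃ m, g (R.f n) = R.f m

/-- `w` lies in the component of `G − x` containing the end of `R`. -/
def InComp (G : SimpleGraph V) (x : V) (R : GRay G) (w : V) : Prop :=
  ∃ m, (∀ i, m ≤ i → R.f i ≠ x) ∧ ∃ p : G.Walk w (R.f m), x ∉ p.support

/-- A sequence of vertices converges to the end represented by `R`. -/
def ConvergesTo (G : SimpleGraph V) (x : ℕ → V) (R : GRay G) : Prop :=
  ∀ v : V, ∃ N : ℕ, ∀ n, N ≤ n → InComp G v R (x n)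

/-- `M` is a submonoid of `Emb(G)`. -/
def IsEmbMonoid (G : SimpleGraph V) (M : Set (V → V)) : Prop :=
  (∀ g ∈ M, IsEmb G g) ∧ (id ∈ M) ∧ ∀ g ∈ M, ∀ h ∈ M, (g ∘ h) ∈ M

/-- The end of `R` is an accumulation point of the orbit of `v0` under `M`:
every basic neighbourhood of the end of `R` meets the orbit. -/
def InLimitSet (G : SimpleGraph V) (M : Set (V → V)) (v0 : V) (R : GRay G) : Prop :=
  ∀ x : V, ∃ g ∈ M, InComp G x R (g v0)

/-- A self-embedding is elliptic if it fixes a vertex or an edge. -/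
def Elliptic (G : SimpleGraph V) (g : V → V) : Prop := FixesVertex g ∨ FixesEdge G g

/-- `g` is hyperbolic: not elliptic and it fixes exactly two ends. -/
def Hyperbolic (G : SimpleGraph V) (g : V → V) : Prop :=
  ¬ Elliptic G g ∧ ∃ R1 R2 : GRay G, ¬ RayEquiv G R1 R2 ∧
    FixesEnd G g R1 ∧ FixesEnd G g R2 ∧
    ∀ S : GRay G, FixesEnd G g S → RayEquiv G S R1 ∨ RayEquiv G S R2

/-- `g` is parabolic: not elliptic and it fixes exactly one end. -/
def Parabolic (G : SimpleGraph V) (g : V → V) : Prop :=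
  ¬ Elliptic G g ∧ ∃ R : GRay G, FixesEnd G g R ∧
    ∀ S : GRay G, FixesEnd G g S → RayEquiv G S R

open Filter

section

variable {G : SimpleGraph V} {g : V → V}

def IsEmb.toHom (hg : IsEmb G g) : G →g G where
  toFun := g
  map_rel' h := hg.2 _ _ h

lemma IsEmb.comp {h : V → V} (hg : IsEmb G g) (hh : IsEmb G h) : IsEmb G (g ∘ h) :=
  ⟨hg.1.comp hh.1, fun _ _ huv => hg.2 _ _ (hh.2 _ _ huv)⟩

lemma IsEmb.iterate (hg : IsEmb G g) : ∀ k, IsEmb G g^[k]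
  | 0 => ⟨Function.injective_id, fun _ _ h => h⟩
  | k + 1 => by
    rw [Function.iterate_succ']
    exact hg.comp (hg.iterate k)

lemma IsEmbMonoid.iterate_mem {M : Set (V → V)} (hM : IsEmbMonoid G M) (hg : g ∈ M) :
    ∀ k, g^[k] ∈ M
  | 0 => hM.2.1
  | k + 1 => by
    rw [Function.iterate_succ']
    exact hM.2.2 g hg _ (hM.iterate_mem hg k)

lemma iterate_apply_eq_add_mul {f : ℕ → V} {a d : ℕ}
    (h : ∀ i, a ≤ i → g (f i) = f (i + d)) (k : ℕ) {i : ℕ} (hi : a ≤ i) :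
    g^[k] (f i) = f (i + k * d) := by
  induction k with
  | zero => simp
  | succ k ih =>
    rw [Function.iterate_succ_apply', ih, h _ (by omega)]
    congr 1
    ring

lemma iterate_apply_add_mul_eq {f : ℕ → V} {a d : ℕ}
    (h : ∀ i, a ≤ i → g (f (i + d)) = f i) (k : ℕ) {i : ℕ} (hi : a ≤ i) :
    g^[k] (f (i + k * d)) = f i := by
  induction k generalizing i with
  | zero => simp
  | succ k ih =>
    rw [Function.iterate_succ_apply', show i + (k + 1) * d = i + d + k * d by ring,
      ih (by omega), h i hi]

lemma SimpleGraph.IsAcyclic.dist_eq_length (hG : G.IsAcyclic) {u v : V} {p : G.Walk u v}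
    (hp : p.IsPath) : G.dist u v = p.length := by
  obtain ⟨q, hq, hlen⟩ := p.reachable.exists_path_of_dist
  rw [← hlen, Subtype.mk.inj <| (hG.subsingleton_path u v).elim ⟨q, hq⟩ ⟨p, hp⟩]

def ReachableAvoiding (G : SimpleGraph V) (x a b : V) : Prop :=
  ∃ w : G.Walk a b, x ∉ w.support

namespace ReachableAvoiding

variable {V' : Type*} {x a b c : V}

lemma refl (ha : a ≠ x) : ReachableAvoiding G x a a :=
  ⟨.nil, by simpa using ha.symm⟩

lemma symm : ReachableAvoiding G x a b → ReachableAvoiding G x b a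
  | ⟨w, hw⟩ => ⟨w.reverse, by simpa using hw⟩

lemma trans : ReachableAvoiding G x a b → ReachableAvoiding G x b c →
    ReachableAvoiding G x a c
  | ⟨w, hw⟩, ⟨w', hw'⟩ => ⟨w.append w', by simp [Walk.mem_support_append_iff, hw, hw']⟩

lemma of_adj (h : G.Adj a b) (ha : a ≠ x) (hb : b ≠ x) : ReachableAvoiding G x a b :=
  ⟨h.toWalk, by simp [ha.symm, hb.symm]⟩

lemma ne_left : ReachableAvoiding G x a b → a ≠ x
  | ⟨w, hw⟩, rfl => hw w.start_mem_support

lemma of_length_lt_dist (p : G.Walk a b) (h : p.length < G.dist x b) :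
    ReachableAvoiding G x a b := by
  classical
  exact ⟨p, fun hx => (dist_le (p.dropUntil x hx)).trans (p.length_dropUntil_le_length hx)
    |>.not_gt h⟩

lemma map {G' : SimpleGraph V'} (f : G →g G') (hf : Function.Injective f) :
    ReachableAvoiding G x a b → ReachableAvoiding G' (f x) (f a) (f b)
  | ⟨w, hw⟩ => ⟨w.map f, by simpa [Walk.support_map, hf.eq_iff] using hw⟩

lemma of_forall_ne {G' : SimpleGraph V'} (f : G →g G') {y : V'} (hy : ∀ u, f u ≠ y)
    (hab : G.Reachable a b) : ReachableAvoiding G' y (f a) (f b) := by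
  obtain ⟨w⟩ := hab
  exact ⟨w.map f, by simpa [Walk.support_map] using fun u _ => hy u⟩

lemma _root_.SimpleGraph.IsAcyclic.not_reachableAvoiding (hG : G.IsAcyclic) {p : G.Walk a b}
    (hp : p.IsPath) (hx : x ∈ p.support) : ¬ ReachableAvoiding G x a b := by
  classical
  rintro ⟨w, hw⟩
  rw [← Subtype.mk.inj <| (hG.subsingleton_path a b).elim ⟨_, w.bypass_isPath⟩ ⟨p, hp⟩] at hx
  exact hw (w.support_bypass_subset_support hx)

lemma of_map {G' : SimpleGraph V'} (hG' : G'.IsAcyclic) (f : G →g G')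
    (hf : Function.Injective f) (hab : G.Reachable a b)
    (h : ReachableAvoiding G' (f x) (f a) (f b)) : ReachableAvoiding G x a b := by
  classical
  obtain ⟨w⟩ := hab
  by_contra hx
  have hxw : x ∈ w.bypass.support := by_contra fun h' => hx ⟨_, h'⟩
  refine hG'.not_reachableAvoiding (w.bypass_isPath.map hf) ?_ h
  simpa [Walk.support_map] using ⟨x, hxw, rfl⟩

end ReachableAvoiding

section Nonbacktracking

def walkAlong (f : ℕ → V) (hf : ∀ i, G.Adj (f i) (f (i + 1))) : (k : ℕ) → G.Walk (f k) (f 0)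
  | 0 => .nil
  | k + 1 => .cons (hf k).symm (walkAlong f hf k)

variable {f : ℕ → V} {hf : ∀ i, G.Adj (f i) (f (i + 1))}

@[simp] lemma length_walkAlong (k : ℕ) : (walkAlong f hf k).length = k := by
  induction k with
  | zero => rfl
  | succ k ih => simp [walkAlong, ih]

lemma mem_support_walkAlong {i k : ℕ} (hik : i ≤ k) : f i ∈ (walkAlong f hf k).support := by
  induction k with
  | zero => simp [walkAlong, Nat.le_zero.1 hik]
  | succ k ih =>
    rcases hik.lt_or_eq with hik | rfl
    · simp [walkAlong, ih (by omega)]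
    · simp [walkAlong]

lemma SimpleGraph.IsAcyclic.isPath_walkAlong (hG : G.IsAcyclic) (hnb : ∀ i, f i ≠ f (i + 2)) :
    ∀ k, (walkAlong f hf k).IsPath
  | 0 => .nil
  | 1 => Walk.IsPath.nil.cons (by simpa [walkAlong] using (hf 0).ne.symm)
  | k + 2 => (hG.isPath_walkAlong hnb (k + 1)).cons fun hmem =>
    hnb k (by simpa [walkAlong] using (hG.eq_snd_of_adj_start (hG.isPath_walkAlong hnb (k + 1))
      (hf (k + 1)) hmem).symm)

lemma SimpleGraph.IsAcyclic.injective_of_nonbacktracking (hG : G.IsAcyclic)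
    (hf : ∀ i, G.Adj (f i) (f (i + 1))) (hnb : ∀ i, f i ≠ f (i + 2)) :
    Function.Injective f := by
  intro i j hij
  wlog hlt : i < j generalizing i j
  · exact (lt_or_eq_of_le (not_lt.1 hlt)).elim (fun h => (this hij.symm h).symm) Eq.symm
  obtain ⟨k, rfl⟩ : ∃ k, j = k + 1 := ⟨j - 1, by omega⟩
  have hpath := hG.isPath_walkAlong (hf := hf) hnb (k + 1)
  rw [walkAlong, Walk.cons_isPath_iff] at hpath
  exact absurd (hij ▸ mem_support_walkAlong (by omega)) hpath.2

lemma GRay.dist_f_zero (hG : G.IsAcyclic) (R : GRay G) (k : ℕ) :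
    G.dist (R.f 0) (R.f k) = k := by
  rw [dist_comm, hG.dist_eq_length (hG.isPath_walkAlong (hf := R.adj)
    (fun i => R.inj.ne (by omega)) k), length_walkAlong]

end Nonbacktracking

namespace GRay

variable (R : GRay G)

def AvoidsFrom (x : V) (m : ℕ) : Prop := ∀ i, m ≤ i → R.f i ≠ x

lemma exists_avoidsFrom (x : V) : ∃ m, R.AvoidsFrom x m := by
  by_cases h : ∃ i, R.f i = x
  · obtain ⟨i, rfl⟩ := h
    exact ⟨i + 1, fun j hj hji => by have := R.inj hji; omega⟩
  · exact ⟨0, fun i _ hi => h ⟨i, hi⟩⟩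

def map (hg : IsEmb G g) : GRay G where
  f n := g (R.f n)
  inj := hg.1.comp R.inj
  adj n := hg.2 _ _ (R.adj n)

@[simp] lemma map_f (hg : IsEmb G g) (n : ℕ) : (R.map hg).f n = g (R.f n) := rfl

variable {R} {x : V} {a b : ℕ}

lemma AvoidsFrom.mono (h : R.AvoidsFrom x a) (hab : a ≤ b) : R.AvoidsFrom x b :=
  fun i hi => h i (hab.trans hi)

lemma AvoidsFrom.map (hg : IsEmb G g) (h : R.AvoidsFrom x a) :
    (R.map hg).AvoidsFrom (g x) a :=
  fun i hi he => h i hi (hg.1 he)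

lemma reachableAvoiding (ha : R.AvoidsFrom x a) (hb : R.AvoidsFrom x b) :
    ReachableAvoiding G x (R.f a) (R.f b) := by
  wlog hab : a ≤ b generalizing a b
  · exact (this hb ha (by omega)).symm
  induction b, hab using Nat.le_induction with
  | base => exact .refl (ha a le_rfl)
  | succ b hab ih =>
    exact (ih (ha.mono hab)).trans (.of_adj (R.adj b) (ha b hab) (hb (b + 1) le_rfl))

end GRay

lemma fixesEnd_iff (hg : IsEmb G g) {R : GRay G} :
    FixesEnd G g R ↔ RayEquiv G (R.map hg) R := by
  constructor
  · rintro ⟨⟨f, _, _⟩, hf, h⟩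
    obtain rfl : f = fun n => g (R.f n) := funext hf
    exact h
  · exact fun h => ⟨R.map hg, fun _ => rfl, h⟩

lemma inComp_iff {x w : V} {R : GRay G} :
    InComp G x R w ↔ ∃ m, R.AvoidsFrom x m ∧ ReachableAvoiding G x w (R.f m) :=
  Iff.rfl

lemma InComp.ne {x w : V} {R : GRay G} (h : InComp G x R w) : w ≠ x :=
  let ⟨_, _, hw⟩ := inComp_iff.1 h
  hw.ne_left

lemma InComp.map (hg : IsEmb G g) {x w : V} {R : GRay G} (h : InComp G x R w) :
    InComp G (g x) (R.map hg) (g w) :=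
  let ⟨m, hm, hw⟩ := inComp_iff.1 h
  inComp_iff.2 ⟨m, hm.map hg, hw.map hg.toHom hg.1⟩

lemma InLimitSet.map (hT : G.IsTree) {M : Set (V → V)} (hM : IsEmbMonoid G M) (hgM : g ∈ M)
    (hg : IsEmb G g) {v0 : V} {R : GRay G} (hR : InLimitSet G M v0 R) :
    InLimitSet G M v0 (R.map hg) := fun x => by
  by_cases hx : ∃ u, g u = x
  · obtain ⟨u, rfl⟩ := hx
    obtain ⟨h, hhM, hu⟩ := hR u
    exact ⟨g ∘ h, hM.2.2 g hgM h hhM, hu.map hg⟩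
  · exact ⟨g, hgM, inComp_iff.2 ⟨0, fun i _ hi => hx ⟨_, hi⟩,
      .of_forall_ne hg.toHom (fun u hu => hx ⟨u, hu⟩) (hT.connected _ _)⟩⟩

namespace RayEquiv

variable {R S Q : GRay G}

lemma _root_.rayEquiv_iff : RayEquiv G R S ↔
    ∀ v, ∃ m n, R.AvoidsFrom v m ∧ S.AvoidsFrom v n ∧ ReachableAvoiding G v (R.f m) (S.f n) :=
  Iff.rfl

lemma reachableAvoiding (h : RayEquiv G R S) {x : V} {i j : ℕ} (hR : R.AvoidsFrom x i)
    (hS : S.AvoidsFrom x j) : ReachableAvoiding G x (R.f i) (S.f j) := by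
  obtain ⟨m, n, hm, hn, hmn⟩ := rayEquiv_iff.1 h x
  exact (R.reachableAvoiding hR hm).trans (hmn.trans (S.reachableAvoiding hn hS))

lemma symm (h : RayEquiv G R S) : RayEquiv G S R := rayEquiv_iff.2 fun v =>
  let ⟨m, n, hm, hn, hmn⟩ := rayEquiv_iff.1 h v
  ⟨n, m, hn, hm, hmn.symm⟩

lemma trans (h : RayEquiv G R S) (h' : RayEquiv G S Q) : RayEquiv G R Q :=
  rayEquiv_iff.2 fun v =>
  let ⟨m, hm⟩ := R.exists_avoidsFrom v
  let ⟨_, hn⟩ := S.exists_avoidsFrom v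
  let ⟨k, hk⟩ := Q.exists_avoidsFrom v
  ⟨m, k, hm, hk, (h.reachableAvoiding hm hn).trans (h'.reachableAvoiding hn hk)⟩

lemma of_shift {a b : ℕ} (h : ∀ i, R.f (a + i) = S.f (b + i)) : RayEquiv G R S := by
  refine rayEquiv_iff.2 fun v => ?_
  obtain ⟨m, hm⟩ := R.exists_avoidsFrom v
  obtain ⟨n, hn⟩ := S.exists_avoidsFrom v
  refine ⟨a + (m + n), b + (m + n), hm.mono (by omega), hn.mono (by omega), ?_⟩
  rw [h]
  exact .refl (hn _ (by omega))

lemma of_inComp (h : ∀ v, ∃ m, R.AvoidsFrom v m ∧ InComp G v S (R.f m)) : RayEquiv G R S :=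
  rayEquiv_iff.2 fun v =>
  let ⟨m, hm, hmS⟩ := h v
  let ⟨n, hn, hmn⟩ := inComp_iff.1 hmS
  ⟨m, n, hm, hn, hmn⟩

lemma map (hG : G.Connected) (hg : IsEmb G g) (h : RayEquiv G R S) :
    RayEquiv G (R.map hg) (S.map hg) := by
  refine rayEquiv_iff.2 fun v => ?_
  by_cases hv : ∃ u, g u = v
  · obtain ⟨u, rfl⟩ := hv
    obtain ⟨m, n, hm, hn, hmn⟩ := rayEquiv_iff.1 h u
    exact ⟨m, n, hm.map hg, hn.map hg, hmn.map hg.toHom hg.1⟩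
  · have hv' : ∀ u, g u ≠ v := fun u hu => hv ⟨u, hu⟩
    exact ⟨0, 0, fun _ _ => hv' _, fun _ _ => hv' _, .of_forall_ne hg.toHom hv' (hG _ _)⟩

lemma of_map (hT : G.IsTree) (hg : IsEmb G g) (h : RayEquiv G (R.map hg) (S.map hg)) :
    RayEquiv G R S := rayEquiv_iff.2 fun v =>
  let ⟨m, n, hm, hn, hmn⟩ := rayEquiv_iff.1 h (g v)
  ⟨m, n, fun i hi he => hm i hi (congrArg g he), fun j hj he => hn j hj (congrArg g he),
    .of_map hT.isAcyclic hg.toHom hg.1 (hT.connected _ _) hmn⟩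

lemma exists_eq (hT : G.IsTree) (h : RayEquiv G R S) : ∃ i j, R.f i = S.f j := by
  classical
  by_contra hdisj
  push Not at hdisj
  -- For a closest pair `R i`, `S j`, prolonging a geodesic from `R i` to `S j` by the edge to
  -- `R (i + 1)` gives a path through `R i`, yet the tails of the rays avoid `R i`.
  obtain ⟨⟨i, j⟩, hmin⟩ : ∃ ij : ℕ × ℕ, ∀ i j,
      G.dist (R.f ij.1) (S.f ij.2) ≤ G.dist (R.f i) (S.f j) :=
    ⟨_, fun i j => Function.argmin_le (fun ij : ℕ × ℕ => G.dist (R.f ij.1) (S.f ij.2)) (i, j)⟩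
  dsimp only at hmin
  obtain ⟨p, hp, hlen⟩ := (hT.connected (R.f i) (S.f j)).exists_path_of_dist
  have hnext : R.f (i + 1) ∉ p.support := fun hmem => by
    have := p.length_dropUntil_lt_length hmem (R.inj.ne (by omega))
    have := dist_le (p.dropUntil _ hmem)
    have := hmin (i + 1) j
    omega
  have hx : R.f i ∈ (Walk.cons (R.adj i).symm p).support := by simp
  refine hT.isAcyclic.not_reachableAvoiding (hp.cons hnext) hx ?_
  exact h.reachableAvoiding (fun k hk => R.inj.ne (by omega)) (fun k _ => (hdisj _ _).symm)

lemma eq_add_of_eq (hT : G.IsTree) (h : RayEquiv G R S) {i j : ℕ} (hij : R.f i = S.f j)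
    (k : ℕ) : R.f (i + k) = S.f (j + k) := by
  induction k with
  | zero => exact hij
  | succ k ih =>
    by_contra hne
    have hadj : G.Adj (R.f (i + k)) (S.f (j + k + 1)) := ih ▸ S.adj (j + k)
    have hpath : (Walk.cons (R.adj (i + k)).symm hadj.toWalk).IsPath := by
      have := S.inj.ne (show j + k + 1 ≠ j + k by omega)
      simp only [Walk.cons_isPath_iff, Adj.toWalk, Walk.support_cons, Walk.support_nil,
        List.mem_cons, List.not_mem_nil, Walk.IsPath.nil, true_and, or_false, not_or]
      exact ⟨by rw [ih]; exact this.symm, R.inj.ne (by omega), hne⟩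
    refine hT.isAcyclic.not_reachableAvoiding hpath (by simp) (h.reachableAvoiding
      (fun l hl he => absurd (R.inj he) (by omega))
      (fun l hl he => absurd (S.inj (he.trans ih)) (by omega)))

end RayEquiv

def IsTranslationRay (g : V → V) (D : GRay G) (n : ℕ) : Prop :=
  0 < n ∧ ∀ i, g (D.f i) = D.f (i + n)

lemma exists_isPath_snd_ne_penultimate (hT : G.IsTree) (hne : ¬ Elliptic G g) :
    ∃ (v : V) (p : G.Walk v (g v)), p.IsPath ∧ 0 < p.length ∧ g p.snd ≠ p.penultimate := by
  have : Nonempty V := hT.connected.nonempty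
  -- At a vertex of minimal displacement, backtracking would either make `g` swap an edge or
  -- give `p.snd` a smaller displacement.
  set v := Function.argmin fun v => G.dist v (g v)
  have hmin (u : V) : G.dist v (g v) ≤ G.dist u (g u) :=
    Function.argmin_le (fun v => G.dist v (g v)) u
  obtain ⟨p, hp, hlen⟩ := (hT.connected v (g v)).exists_path_of_dist
  have hvg : v ≠ g v := fun h => hne (.inl ⟨v, h.symm⟩)
  have hpos : 0 < p.length := Walk.not_nil_iff_lt_length.1 (p.not_nil_of_ne hvg)
  refine ⟨v, p, hp, hpos, fun hback => ?_⟩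
  rcases (by omega : p.length = 1 ∨ 2 ≤ p.length) with h1 | h2
  · have hsnd : p.snd = g v := by rw [Walk.snd, ← h1, Walk.getVert_length]
    refine hne (.inr ⟨v, g v, hsnd ▸ p.adj_snd (p.not_nil_of_ne hvg), .inr ⟨rfl, ?_⟩⟩)
    simpa [hsnd, Walk.penultimate, h1] using hback
  · have h := dist_le ((p.drop 1).take (p.length - 2))
    rw [Walk.take_length, Walk.drop_length, Walk.drop_getVert,
      show 1 + (p.length - 2) = p.length - 1 by omega] at h
    change G.dist p.snd p.penultimate ≤ min (p.length - 2) (p.length - 1) at h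
    have := hback ▸ hmin p.snd
    omega

section Axis

variable {v : V} (p : G.Walk v (g v))

def axisSeq (i : ℕ) : V := g^[i / p.length] (p.getVert (i % p.length))

variable {p}

lemma axisSeq_add_length (hpos : 0 < p.length) (i : ℕ) :
    axisSeq p (i + p.length) = g (axisSeq p i) := by
  simp only [axisSeq, Nat.add_div_right _ hpos, Nat.add_mod_right, Function.iterate_succ_apply']

lemma axisSeq_of_le (hpos : 0 < p.length) {i : ℕ} (hi : i ≤ p.length) :
    axisSeq p i = p.getVert i := by
  rcases hi.lt_or_eq with hi | rfl
  · simp [axisSeq, Nat.div_eq_of_lt hi, Nat.mod_eq_of_lt hi]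
  · rw [← zero_add p.length, axisSeq_add_length hpos]
    simp [axisSeq]

lemma axisSeq_add (hpos : 0 < p.length) (i j : ℕ) :
    axisSeq p (i + j) = g^[i / p.length] (axisSeq p (i % p.length + j)) := by
  rw [iterate_apply_eq_add_mul (a := 0) (fun k _ => (axisSeq_add_length hpos k).symm) _
    (Nat.zero_le _)]
  congr 1
  have := Nat.mod_add_div' i p.length
  omega

lemma axisSeq_eq_iterate (hpos : 0 < p.length) (i : ℕ) :
    axisSeq p i = g^[i / p.length] (axisSeq p (i % p.length)) :=
  axisSeq_add hpos i 0

lemma axisSeq_adj (hpos : 0 < p.length) (hg : IsEmb G g) (i : ℕ) :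
    G.Adj (axisSeq p i) (axisSeq p (i + 1)) := by
  have hr := Nat.mod_lt i hpos
  rw [axisSeq_eq_iterate hpos, axisSeq_add hpos i 1]
  refine (hg.iterate _).2 _ _ ?_
  rw [axisSeq_of_le hpos hr.le, axisSeq_of_le hpos hr]
  exact p.adj_getVert_succ hr

lemma axisSeq_ne_add_two (hpos : 0 < p.length) (hg : IsEmb G g) (hp : p.IsPath)
    (hnb : g p.snd ≠ p.penultimate) (i : ℕ) : axisSeq p i ≠ axisSeq p (i + 2) := by
  have hr := Nat.mod_lt i hpos
  rw [axisSeq_eq_iterate hpos, axisSeq_add hpos i 2]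
  refine (hg.iterate _).1.ne ?_
  rw [axisSeq_of_le hpos hr.le]
  by_cases h2 : i % p.length + 2 ≤ p.length
  · rw [axisSeq_of_le hpos h2]
    exact fun h => by
      have := hp.getVert_injOn (by simp; omega) (by simp; omega) h
      omega
  · rw [show i % p.length + 2 = 1 + p.length by omega, axisSeq_add_length hpos,
      axisSeq_of_le hpos hpos, show i % p.length = p.length - 1 by omega]
    exact hnb.symm

end Axis

theorem exists_isTranslationRay (hT : G.IsTree) (hg : IsEmb G g) (hne : ¬ Elliptic G g) :
    ∃ (D : GRay G) (n : ℕ), IsTranslationRay g D n := by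
  obtain ⟨v, p, hp, hpos, hnb⟩ := exists_isPath_snd_ne_penultimate hT hne
  exact ⟨⟨axisSeq p, hT.isAcyclic.injective_of_nonbacktracking (axisSeq_adj hpos hg)
    (axisSeq_ne_add_two hpos hg hp hnb), axisSeq_adj hpos hg⟩, p.length, hpos,
    fun i => (axisSeq_add_length hpos i).symm⟩

namespace IsTranslationRay

variable {D : GRay G} {n : ℕ}

lemma eventually_inComp (hT : G.IsTree) (hg : IsEmb G g) (hD : IsTranslationRay g D n)
    (w y : V) : ∀ᶠ k in atTop, InComp G y D (g^[k] w) := by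
  obtain ⟨P⟩ := hT.connected w (D.f 0)
  obtain ⟨m, hm⟩ := D.exists_avoidsFrom y
  refine eventually_atTop.2 ⟨P.length + G.dist (D.f 0) y + m + 1, fun k hk => ?_⟩
  have hkn : k ≤ k * n := Nat.le_mul_of_pos_right k hD.1
  have hDk : g^[k] (D.f 0) = D.f (k * n) := by
    simpa using iterate_apply_eq_add_mul (i := 0) (fun i _ => hD.2 i) k le_rfl
  have h := hT.connected.dist_triangle (u := D.f 0) (v := y) (w := D.f (k * n))
  rw [D.dist_f_zero hT.isAcyclic] at h
  have hP := ReachableAvoiding.of_length_lt_dist (x := y) (P.map (hg.iterate k).toHom) <| by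
    rw [Walk.length_map]
    change P.length < G.dist y (g^[k] (D.f 0))
    rw [hDk]
    omega
  exact inComp_iff.2 ⟨k * n, hm.mono (by omega), hDk ▸ hP⟩

lemma inLimitSet (hT : G.IsTree) {M : Set (V → V)} (hM : IsEmbMonoid G M) (hgM : g ∈ M)
    (hD : IsTranslationRay g D n) (v0 : V) : InLimitSet G M v0 D := fun x =>
  let ⟨k, hk⟩ := (hD.eventually_inComp hT (hM.1 g hgM) v0 x).exists
  ⟨g^[k], hM.iterate_mem hgM k, hk⟩

lemma exists_backward_shift (hT : G.IsTree) (hg : IsEmb G g) (hD : IsTranslationRay g D n)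
    {S : GRay G} (hS : FixesEnd G g S) (hSD : ¬ RayEquiv G S D) :
    ∃ a q, ∀ i, a ≤ i → g (S.f (i + q)) = S.f i := by
  have hS := (fixesEnd_iff hg).1 hS
  obtain ⟨i, j, hij⟩ := hS.exists_eq hT
  have hshift := hS.eq_add_of_eq hT hij
  by_cases hji : j ≤ i
  · refine ⟨j, i - j, fun l hl => ?_⟩
    simpa [show i + (l - j) = l + (i - j) by omega, show j + (l - j) = l by omega]
      using hshift (l - j)
  -- Otherwise `g` pushes the tail of `S` forward, so the `g`-orbit of `S i` runs along `S`
  -- while converging to the end of `D`.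
  refine absurd (RayEquiv.of_inComp fun v => ?_) hSD
  obtain ⟨m, hm⟩ := S.exists_avoidsFrom v
  obtain ⟨K, hK⟩ := eventually_atTop.1 (hD.eventually_inComp hT hg (S.f i) v)
  have hfwd : ∀ l, i ≤ l → g (S.f l) = S.f (l + (j - i)) := fun l hl => by
    simpa [show i + (l - i) = l by omega, show j + (l - i) = l + (j - i) by omega]
      using hshift (l - i)
  refine ⟨i + (K + m) * (j - i), hm.mono ?_, iterate_apply_eq_add_mul hfwd _ le_rfl ▸ hK _ ?_⟩
  · have := Nat.le_mul_of_pos_right (K + m) (by omega : 0 < j - i)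
    omega
  · omega

lemma rayEquiv_of_backward (hT : G.IsTree) (hg : IsEmb G g) (hD : IsTranslationRay g D n)
    {S S' : GRay G} {a a' q q' : ℕ} (hS : ∀ i, a ≤ i → g (S.f (i + q)) = S.f i)
    (hS' : ∀ i, a' ≤ i → g (S'.f (i + q')) = S'.f i) : RayEquiv G S S' := by
  classical
  refine rayEquiv_iff.2 fun z => ?_
  obtain ⟨m, hm⟩ := S.exists_avoidsFrom z
  obtain ⟨m', hm'⟩ := S'.exists_avoidsFrom z
  obtain ⟨P⟩ := hT.connected (S.f (max a m)) (S'.f (max a' m'))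
  have hescape : ∀ᶠ k in atTop, ∀ y ∈ P.support.toFinset, g^[k] z ≠ y :=
    (eventually_all_finset _).2 fun y _ =>
      (hD.eventually_inComp hT hg z y).mono fun _ => InComp.ne
  obtain ⟨k, hk⟩ := hescape.exists
  have hP : ReachableAvoiding G (g^[k] z) (g^[k] (S.f (max a m + k * q)))
      (g^[k] (S'.f (max a' m' + k * q'))) := by
    rw [iterate_apply_add_mul_eq hS k (le_max_left _ _),
      iterate_apply_add_mul_eq hS' k (le_max_left _ _)]
    exact ⟨P, fun hz => hk _ (List.mem_toFinset.2 hz) rfl⟩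
  exact ⟨_, _, hm.mono (by omega), hm'.mono (by omega),
    .of_map hT.isAcyclic (hg.iterate k).toHom (hg.iterate k).1 (hT.connected _ _) hP⟩

lemma rayEquiv_of_fixesEnd (hT : G.IsTree) (hg : IsEmb G g) (hD : IsTranslationRay g D n)
    {S S' : GRay G} (hS : FixesEnd G g S) (hS' : FixesEnd G g S')
    (hSD : ¬ RayEquiv G S D) (hS'D : ¬ RayEquiv G S' D) : RayEquiv G S S' :=
  let ⟨_, _, hback⟩ := hD.exists_backward_shift hT hg hS hSD
  let ⟨_, _, hback'⟩ := hD.exists_backward_shift hT hg hS' hS'D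
  hD.rayEquiv_of_backward hT hg hback hback'

end IsTranslationRay

end

theorem stmt16 (G : SimpleGraph V) (hT : G.IsTree) (M : Set (V → V))
    (hM : IsEmbMonoid G M) (v0 : V)
    (h2 : ∃ R1 R2 : GRay G, InLimitSet G M v0 R1 ∧ InLimitSet G M v0 R2 ∧ ¬ RayEquiv G R1 R2 ∧
      ∀ R : GRay G, InLimitSet G M v0 R → RayEquiv G R R1 ∨ RayEquiv G R R2) :
    ∀ g ∈ M, ¬ Elliptic G g → Hyperbolic G g := by
  obtain ⟨R1, R2, hL1, hL2, h12, hL⟩ := h2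
  intro g hgM hne
  have hg := hM.1 g hgM
  obtain ⟨D, n, hD⟩ := exists_isTranslationRay hT hg hne
  wlog hD1 : RayEquiv G D R1 generalizing R1 R2
  · exact this R2 R1 hL2 hL1 (fun h => h12 h.symm) (fun R hR => (hL R hR).symm)
      ((hL D (hD.inLimitSet hT hM hgM v0)).resolve_left hD1)
  have hgD : RayEquiv G (D.map hg) D := .of_shift (a := 0) (b := n) fun i => by
    simp [hD.2, add_comm]
  have hg1 : RayEquiv G (R1.map hg) R1 := ((hD1.symm.map hT.connected hg).trans hgD).trans hD1
  have hg2 : RayEquiv G (R2.map hg) R2 := (hL _ (hL2.map hT hM hgM hg)).resolve_left fun h =>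
    h12 (RayEquiv.of_map hT hg (h.trans hg1.symm)).symm
  have h2D : ¬ RayEquiv G R2 D := fun h => h12 (h.trans hD1).symm
  have hfix2 := (fixesEnd_iff hg).2 hg2
  refine ⟨hne, R1, R2, h12, (fixesEnd_iff hg).2 hg1, hfix2, fun S hS => ?_⟩
  by_cases hSD : RayEquiv G S D
  · exact .inl (hSD.trans hD1)
  · exact .inr (hD.rayEquiv_of_fixesEnd hT hg hS hfix2 hSD h2D)
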